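/- For any positive integers d > m+1, the alternating sum ∑_{j=0}^{m+1} (-1)^j C(d,j) C(d-1-j, m+1-j) equals (-1)^{m+1}. Consequently, in the coefficient extraction of the string-equation error term, the coefficient of x_0^{m+1} x_1^{e_1}···x_k^{e_k} in ∑_{j=0}^{d-k} (-1)^j C(d,j) x_0^j p_{d-k-j}(x_0+x_1,...,x_0+x_k) is (-1)^{m+1}, where d = m + ∑ e_i + k + 1. -/

import Mathlib

open Finset MvPolynomial

/-!
Since `C(d, j) C(d - j, n - j) = C(d, n) C(n, j)`, the sums `∑_{j ≤ n} (-1)^j C(d, j) C(d - j, n - j)`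
vanish for `n > 0`. Pascal's rule splits each of them as `A n + A (n + 1)`, where
`A n = ∑_{j ≤ n} (-1)^j C(d, j) C(d - 1 - j, n - j)`, so `A n = (-1)^n` for `n < d`.

Expanding every factor `(x_0 + x_i)^{f_i}` binomially, the coefficient of `x_0^a x^e` in
`p_{a + |e|}(x_0 + x_1, …, x_0 + x_k)` is `∑_{|g| = a} ∏ C(e_i + g_i, e_i)`, the coefficient of
`t^a` in `∏ (1 - t)^{-(e_i + 1)} = (1 - t)^{-(|e| + k)}`, that is `C(|e| + k + a - 1, a)`.
Multiplying by `x_0^j` shifts `a` by `j`, so the coefficient of the theorem is `A (m + 1)`.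
-/

/-- The complete homogeneous symmetric polynomial of degree `d` in `k` variables, evaluated
at `x_0 + x_1, …, x_0 + x_k`, as a polynomial in `x_0, x_1, …, x_k`. -/
noncomputable def hshift (k d : ℕ) : MvPolynomial (Fin (k + 1)) ℤ :=
  ∑ f ∈ Finset.Nat.antidiagonalTuple k d, ∏ i : Fin k, (X 0 + X i.succ) ^ f i

theorem alternating_sum_range_choose_mul_choose_sub {n : ℕ} (hn : n ≠ 0) (d : ℕ) :
    ∑ j ∈ range (n + 1), ((-1 : ℤ) ^ j * d.choose j * (d - j).choose (n - j)) = 0 := by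
  have hfactor : ∀ j ∈ range (n + 1), ((-1 : ℤ) ^ j * d.choose j * (d - j).choose (n - j))
      = d.choose n * ((-1) ^ j * n.choose j) := fun j hj => by
    have := Nat.choose_mul (n := d) (Nat.lt_succ_iff.mp (mem_range.mp hj))
    rw [mul_assoc, ← Nat.cast_mul, ← this, Nat.cast_mul]
    ring
  rw [sum_congr rfl hfactor, ← mul_sum, Int.alternating_sum_range_choose_of_ne hn, mul_zero]

theorem alternating_sum_range_choose_mul_choose_pred_sub {n d : ℕ} (hnd : n < d) :
    ∑ j ∈ range (n + 1), ((-1 : ℤ) ^ j * d.choose j * (d - 1 - j).choose (n - j)) = (-1) ^ n := by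
  induction n with
  | zero => simp
  | succ n ih =>
    have hpascal : ∀ j ∈ range (n + 1), ((-1 : ℤ) ^ j * d.choose j * (d - j).choose (n + 1 - j))
        = (-1) ^ j * d.choose j * (d - 1 - j).choose (n - j)
          + (-1) ^ j * d.choose j * (d - 1 - j).choose (n + 1 - j) := fun j hj => by
      have hj := mem_range.mp hj
      rw [show d - j = d - 1 - j + 1 by omega, show n + 1 - j = n - j + 1 by omega,
        Nat.choose_succ_succ', Nat.cast_add]
      ring
    have hzero := alternating_sum_range_choose_mul_choose_sub n.succ_ne_zero d
    rw [sum_range_succ, sum_congr rfl hpascal, sum_add_distrib, ih (by omega)] at hzero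
    rw [sum_range_succ]
    simp only [Nat.sub_self, Nat.choose_zero_right] at hzero ⊢
    linear_combination hzero

theorem PowerSeries.coeff_prod_fin {R : Type*} [CommSemiring R] {k : ℕ}
    (F : Fin k → PowerSeries R) (a : ℕ) :
    coeff a (∏ i, F i) = ∑ g ∈ Nat.antidiagonalTuple k a, ∏ i, coeff (g i) (F i) := by
  rw [coeff_prod, finsuppAntidiag, sum_map, ← piAntidiag_univ_fin_eq_antidiagonalTuple]
  exact sum_attach (univ.piAntidiag a) fun g => ∏ i, coeff (g i) (F i)

theorem PowerSeries.coeff_mk_one_pow {R : Type*} [CommRing R] (n a : ℕ) :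
    coeff a ((mk 1 : PowerSeries R) ^ n) = n.multichoose a := by
  cases n with
  | zero => cases a <;> simp [coeff_one]
  | succ n =>
    rw [mk_one_pow_eq_mk_choose_add, coeff_mk, Nat.multichoose_eq,
      show n + 1 + a - 1 = n + a by omega, Nat.choose_symm_add]

theorem Nat.sum_antidiagonalTuple_prod_multichoose {k : ℕ} (c : Fin k → ℕ) (a : ℕ) :
    ∑ g ∈ Nat.antidiagonalTuple k a, ∏ i, (c i).multichoose (g i)
      = (∑ i, c i).multichoose a := by
  have := PowerSeries.coeff_prod_fin (fun i => (PowerSeries.mk 1 : PowerSeries ℤ) ^ c i) a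
  simp only [PowerSeries.coeff_mk_one_pow, prod_pow_eq_pow_sum] at this
  exact_mod_cast this.symm

section

variable {R : Type*} [CommSemiring R] {k : ℕ}

theorem X_add_X_pow_eq_sum_monomial {σ : Type*} (s s' : σ) (n : ℕ) :
    (X s' + X s : MvPolynomial σ R) ^ n
      = ∑ t ∈ range (n + 1), monomial (Finsupp.single s t + Finsupp.single s' (n - t))
          (n.choose t : R) := by
  rw [add_comm, add_pow]
  refine sum_congr rfl fun t _ => ?_
  rw [X_pow_eq_monomial, X_pow_eq_monomial, monomial_mul, ← map_natCast (C (σ := σ)),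
    mul_comm, C_mul_monomial, mul_one, mul_one]

theorem sum_single_succ_add_single_zero (f t : Fin k → ℕ) :
    ∑ i, (Finsupp.single i.succ (t i) + Finsupp.single 0 (f i - t i))
      = Finsupp.equivFunOnFinite.symm (Fin.cons (∑ i, (f i - t i)) t) := by
  ext j
  rw [Finsupp.finsetSum_apply]
  induction j using Fin.cases with
  | zero => simp [Fin.succ_ne_zero]
  | succ j => simp [Finsupp.single_apply, Fin.succ_inj]

theorem prod_X_zero_add_X_succ_pow (f : Fin k → ℕ) :
    ∏ i, (X 0 + X i.succ : MvPolynomial (Fin (k + 1)) R) ^ f i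
      = ∑ t ∈ Fintype.piFinset fun i => range (f i + 1),
          monomial (Finsupp.equivFunOnFinite.symm (Fin.cons (∑ i, (f i - t i)) t))
            (∏ i, ((f i).choose (t i) : R)) := by
  simp_rw [X_add_X_pow_eq_sum_monomial, prod_univ_sum, ← monomial_sum_prod,
    sum_single_succ_add_single_zero]

theorem coeff_prod_X_zero_add_X_succ_pow (f e : Fin k → ℕ) (a : ℕ) :
    coeff (Finsupp.equivFunOnFinite.symm (Fin.cons a e))
        (∏ i, (X 0 + X i.succ : MvPolynomial (Fin (k + 1)) R) ^ f i)
      = if (∀ i, e i ≤ f i) ∧ ∑ i, (f i - e i) = a then ∏ i, ((f i).choose (e i) : R) else 0 := by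
  have hexp : ∀ t : Fin k → ℕ, Finsupp.equivFunOnFinite.symm (Fin.cons (∑ i, (f i - t i)) t)
      = Finsupp.equivFunOnFinite.symm (Fin.cons a e) ↔ t = e ∧ ∑ i, (f i - e i) = a := by
    intro t
    rw [Equiv.apply_eq_iff_eq, Fin.cons_inj]
    constructor
    · rintro ⟨h, rfl⟩; exact ⟨rfl, h⟩
    · rintro ⟨rfl, h⟩; exact ⟨h, rfl⟩
  simp only [prod_X_zero_add_X_succ_pow, coeff_sum, coeff_monomial, hexp, ite_and]
  rw [sum_ite_eq']
  simp [Fintype.mem_piFinset]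

theorem coeff_cons_X_zero_pow_mul (a j : ℕ) (e : Fin k → ℕ) (p : MvPolynomial (Fin (k + 1)) R) :
    coeff (Finsupp.equivFunOnFinite.symm (Fin.cons a e)) (X 0 ^ j * p)
      = if j ≤ a then coeff (Finsupp.equivFunOnFinite.symm (Fin.cons (a - j) e)) p else 0 := by
  have hsub : Finsupp.equivFunOnFinite.symm (Fin.cons a e) - Finsupp.single 0 j
      = Finsupp.equivFunOnFinite.symm (Fin.cons (a - j) e) := by
    ext i
    induction i using Fin.cases with
    | zero => simp
    | succ i => simp
  simp [X_pow_eq_monomial, coeff_monomial_mul', hsub, Finsupp.single_le_iff]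

theorem coeff_hshift (a : ℕ) (e : Fin k → ℕ) :
    coeff (Finsupp.equivFunOnFinite.symm (Fin.cons a e)) (hshift k (a + ∑ i, e i))
      = ((∑ i, e i) + k).multichoose a := by
  have hsum : ∑ i, (e i + 1) = ∑ i, e i + k := by simp [sum_add_distrib]
  rw [← hsum, ← Nat.sum_antidiagonalTuple_prod_multichoose, hshift, coeff_sum]
  simp_rw [coeff_prod_X_zero_add_X_succ_pow]
  push_cast
  symm
  refine sum_of_injOn (e + ·) (add_right_injective e).injOn ?_ ?_ ?_
  · intro g hg
    simp only [mem_coe, Nat.mem_antidiagonalTuple, Pi.add_apply, sum_add_distrib] at hg ⊢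
    rw [hg, add_comm]
  · intro f hf hnot
    rw [if_neg]
    rintro ⟨hle, hdeg⟩
    refine hnot ⟨f - e, ?_, ?_⟩
    · simpa [Nat.mem_antidiagonalTuple] using hdeg
    · exact add_tsub_cancel_of_le hle
  · intro g hg
    rw [if_pos ⟨fun i => Nat.le_add_right _ _, by simpa [Nat.mem_antidiagonalTuple] using hg⟩]
    refine prod_congr rfl fun i _ => ?_
    rw [Nat.multichoose_eq, Pi.add_apply, add_right_comm, Nat.add_sub_cancel, Nat.choose_symm_add]

end

/-- (1) For `d > m+1`, `∑_{j=0}^{m+1} (-1)^j C(d,j) C(d-1-j, m+1-j) = (-1)^{m+1}`.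
(2) Consequently, with `d = m + ∑ e_i + k + 1`, the coefficient of
`x_0^{m+1} x_1^{e_1} ⋯ x_k^{e_k}` in
`∑_{j=0}^{d-k} (-1)^j C(d,j) x_0^j p_{d-k-j}(x_0+x_1,…,x_0+x_k)` is `(-1)^{m+1}`. -/
theorem stmt_18 :
    (∀ m d : ℕ, m + 1 < d →
      ∑ j ∈ range (m + 2),
          ((-1 : ℤ) ^ j * (d.choose j) * ((d - 1 - j).choose (m + 1 - j)) : ℤ)
        = (-1 : ℤ) ^ (m + 1)) ∧
    (∀ k m : ℕ, 1 ≤ k → ∀ e : Fin k → ℕ,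
      MvPolynomial.coeff (Finsupp.equivFunOnFinite.symm (Fin.cons (m + 1) e))
          (∑ j ∈ range ((m + (∑ i, e i) + k + 1) - k + 1),
            (-1 : MvPolynomial (Fin (k + 1)) ℤ) ^ j
              * ((m + (∑ i, e i) + k + 1).choose j : MvPolynomial (Fin (k + 1)) ℤ)
              * (X 0) ^ j * hshift k ((m + (∑ i, e i) + k + 1) - k - j))
        = (-1 : ℤ) ^ (m + 1)) := by
  refine ⟨fun m d hd => alternating_sum_range_choose_mul_choose_pred_sub hd, fun k m _ e => ?_⟩
  set E := ∑ i, e i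
  set d := m + E + k + 1
  have hterm : ∀ j, coeff (Finsupp.equivFunOnFinite.symm (Fin.cons (m + 1) e))
      ((-1 : MvPolynomial (Fin (k + 1)) ℤ) ^ j * (d.choose j : MvPolynomial (Fin (k + 1)) ℤ)
        * X 0 ^ j * hshift k (d - k - j))
      = if j < m + 2 then (-1 : ℤ) ^ j * d.choose j * (d - 1 - j).choose (m + 1 - j) else 0 := by
    intro j
    have hC : (-1 : MvPolynomial (Fin (k + 1)) ℤ) ^ j * (d.choose j : MvPolynomial _ ℤ)
        = C ((-1 : ℤ) ^ j * d.choose j) := by simp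
    rw [hC, mul_assoc, coeff_C_mul, coeff_cons_X_zero_pow_mul]
    by_cases hj : j < m + 2
    · rw [if_pos (by omega), if_pos hj, show d - k - j = (m + 1 - j) + E by omega, coeff_hshift,
        Nat.multichoose_eq, show E + k + (m + 1 - j) - 1 = d - 1 - j by omega]
    · rw [if_neg (by omega), if_neg hj, mul_zero]
  rw [coeff_sum, sum_congr rfl fun j _ => hterm j,
    ← sum_subset (range_subset_range.2 (by omega : m + 2 ≤ d - k + 1))
      fun j _ hj => if_neg (by simpa using hj),
    sum_congr rfl fun j hj => if_pos (mem_range.1 hj)]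
  exact alternating_sum_range_choose_mul_choose_pred_sub (by omega)
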